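/- arXiv:2112.04692 — 4 statements merged into one kernel-verified Lean document; each statement's English description precedes it below -/
import Mathlib

section
/- Let d ≥ 1, let p : ℝ^d → ℝ be nonnegative, let D : ℝ^d → Matrix (Fin d) (Fin d) ℝ take symmetric values, let r : ℝ^d → ℝ^d, and let ψ, ψ* : ℝ^d → ℝ be twice continuously differentiable. Assume the functions x ↦ p(x)‖∇ψ*(x)‖²_{D(x)}, x ↦ p(x)‖∇ψ(x)‖²_{D(x)}, x ↦ p(x)(r(x)·∇ψ(x) + ½ tr(D(x) Hess ψ(x))), and x ↦ p(x) ∇ψ(x)·D(x)∇ψ*(x) are all integrable on ℝ^d, and assume the weak stationary Fokker–Planck relation ∫_{ℝ^d} p(x) ( r(x)·∇ψ(x) + ½ tr(D(x) Hess ψ(x)) + ∇ψ(x)·D(x)∇ψ*(x) ) dx = 0. Then ½ ∫_{ℝ^d} p(x) ‖∇ψ*(x)‖²_{D(x)} dx + ε[ψ] = ½ ∫_{ℝ^d} p(x) ‖∇ψ*(x) − ∇ψ(x)‖²_{D(x)} dx. -/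
open MeasureTheory Matrix

/-- Partial derivative in the `i`-th coordinate direction. -/
noncomputable def partialDeriv' {d : ℕ} (f : (Fin d → ℝ) → ℝ) (i : Fin d)
    (x : Fin d → ℝ) : ℝ :=
  fderiv ℝ f x (Pi.single i 1)

/-- Gradient vector of a scalar function on `ℝ^d`. -/
noncomputable def grad' {d : ℕ} (f : (Fin d → ℝ) → ℝ) (x : Fin d → ℝ) : Fin d → ℝ :=
  fun i => partialDeriv' f i x

/-- Hessian matrix of a scalar function on `ℝ^d`. -/
noncomputable def hess' {d : ℕ} (f : (Fin d → ℝ) → ℝ) (x : Fin d → ℝ) :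
    Matrix (Fin d) (Fin d) ℝ :=
  fun i j => partialDeriv' (partialDeriv' f j) i x

/-- completing the square identity for the variational functional
`ε[ψ] = ∫ p ( ½‖∇ψ‖²_D + r·∇ψ + ½ tr(D Hess ψ) )` under the weak stationary
Fokker–Planck relation. -/
theorem variational_square_identity
    (d : ℕ) (hd : 1 ≤ d)
    (p : (Fin d → ℝ) → ℝ) (hp : ∀ x, 0 ≤ p x)
    (D : (Fin d → ℝ) → Matrix (Fin d) (Fin d) ℝ) (hDsymm : ∀ x, (D x).IsSymm)
    (r : (Fin d → ℝ) → (Fin d → ℝ))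
    (ψ ψs : (Fin d → ℝ) → ℝ)
    (hψ : ContDiff ℝ 2 ψ) (hψs : ContDiff ℝ 2 ψs)
    (hint1 : Integrable (fun x => p x * (grad' ψs x ⬝ᵥ (D x *ᵥ grad' ψs x))))
    (hint2 : Integrable (fun x => p x * (grad' ψ x ⬝ᵥ (D x *ᵥ grad' ψ x))))
    (hint3 : Integrable (fun x =>
      p x * (r x ⬝ᵥ grad' ψ x + (1 / 2) * (D x * hess' ψ x).trace)))
    (hint4 : Integrable (fun x => p x * (grad' ψ x ⬝ᵥ (D x *ᵥ grad' ψs x))))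
    (hFP : ∫ x, p x * (r x ⬝ᵥ grad' ψ x + (1 / 2) * (D x * hess' ψ x).trace
        + grad' ψ x ⬝ᵥ (D x *ᵥ grad' ψs x)) = 0) :
    (1 / 2) * (∫ x, p x * (grad' ψs x ⬝ᵥ (D x *ᵥ grad' ψs x)))
      + (∫ x, p x * ((1 / 2) * (grad' ψ x ⬝ᵥ (D x *ᵥ grad' ψ x))
          + r x ⬝ᵥ grad' ψ x + (1 / 2) * (D x * hess' ψ x).trace))
      = (1 / 2) * ∫ x, p x *
          ((grad' ψs x - grad' ψ x) ⬝ᵥ (D x *ᵥ (grad' ψs x - grad' ψ x))) := by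
  set a := fun x => grad' ψs x with ha
  set b := fun x => grad' ψ x with hb
  have hsym : ∀ x (u v : Fin d → ℝ), u ⬝ᵥ (D x *ᵥ v) = v ⬝ᵥ (D x *ᵥ u) := by
    intro x u v
    rw [Matrix.dotProduct_mulVec, ← Matrix.mulVec_transpose, (hDsymm x).eq,
      dotProduct_comm]
  -- expand hFP
  have hFP' : (∫ x, p x * (r x ⬝ᵥ b x + (1 / 2) * (D x * hess' ψ x).trace))
      + (∫ x, p x * (b x ⬝ᵥ (D x *ᵥ a x))) = 0 := by
    rw [← integral_add hint3 hint4]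
    rw [← hFP]
    congr 1; funext x; ring
  have hQ : (∫ x, p x * ((1 / 2) * (b x ⬝ᵥ (D x *ᵥ b x))
        + r x ⬝ᵥ b x + (1 / 2) * (D x * hess' ψ x).trace))
      = (1/2) * (∫ x, p x * (b x ⬝ᵥ (D x *ᵥ b x)))
        + (∫ x, p x * (r x ⬝ᵥ b x + (1 / 2) * (D x * hess' ψ x).trace)) := by
    rw [← integral_const_mul]
    rw [← integral_add (hint2.const_mul (1/2)) hint3]
    congr 1; funext x; ring
  have hR : (∫ x, p x *
        ((a x - b x) ⬝ᵥ (D x *ᵥ (a x - b x))))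
      = (∫ x, p x * (a x ⬝ᵥ (D x *ᵥ a x)))
        + (∫ x, p x * (b x ⬝ᵥ (D x *ᵥ b x)))
        - 2 * (∫ x, p x * (b x ⬝ᵥ (D x *ᵥ a x))) := by
    have : (fun x => p x * ((a x - b x) ⬝ᵥ (D x *ᵥ (a x - b x))))
        = fun x => p x * (a x ⬝ᵥ (D x *ᵥ a x)) + p x * (b x ⬝ᵥ (D x *ᵥ b x))
          - 2 * (p x * (b x ⬝ᵥ (D x *ᵥ a x))) := by
      funext x
      rw [sub_dotProduct, Matrix.mulVec_sub, dotProduct_sub,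
        dotProduct_sub, hsym x (a x) (b x)]
      ring
    have hI1 : Integrable (fun x => p x * (a x ⬝ᵥ (D x *ᵥ a x))
        + p x * (b x ⬝ᵥ (D x *ᵥ b x))) := hint1.add hint2
    have hI2 : Integrable (fun x => 2 * (p x * (b x ⬝ᵥ (D x *ᵥ a x)))) :=
      hint4.const_mul 2
    rw [this, integral_sub hI1 hI2, integral_add hint1 hint2, integral_const_mul]
  rw [hQ, hR]
  linarith [hFP']
end

section
/- Let d ≥ 1, let p : ℝ^d → ℝ be nonnegative, let D : ℝ^d → Matrix (Fin d) (Fin d) ℝ take symmetric positive semidefinite values, let r : ℝ^d → ℝ^d, and let ψ, ψ* : ℝ^d → ℝ be twice continuously differentiable. Assume the functions x ↦ p(x)‖∇ψ*(x)‖²_{D(x)}, x ↦ p(x)‖∇ψ(x)‖²_{D(x)}, x ↦ p(x)(r(x)·∇ψ(x) + ½ tr(D(x) Hess ψ(x))), and x ↦ p(x) ∇ψ(x)·D(x)∇ψ*(x) are all integrable on ℝ^d, and assume the weak stationary Fokker–Planck relation ∫_{ℝ^d} p(x) ( r(x)·∇ψ(x) + ½ tr(D(x) Hess ψ(x)) +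 ∇ψ(x)·D(x)∇ψ*(x) ) dx = 0. Then the variational lower bound −ε[ψ] ≤ ½ ∫_{ℝ^d} p(x) ‖∇ψ*(x)‖²_{D(x)} dx holds. -/
open MeasureTheory Matrix

/-- the variational lower bound
`-ε[ψ] ≤ ½ ∫ p ‖∇ψ*‖²_D` under the weak stationary Fokker–Planck relation. -/
theorem variational_lower_bound
    (d : ℕ) (hd : 1 ≤ d)
    (p : (Fin d → ℝ) → ℝ) (hp : ∀ x, 0 ≤ p x)
    (D : (Fin d → ℝ) → Matrix (Fin d) (Fin d) ℝ)
    (hDsymm : ∀ x, (D x).IsSymm) (hDpsd : ∀ x, (D x).PosSemidef)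
    (r : (Fin d → ℝ) → (Fin d → ℝ))
    (ψ ψs : (Fin d → ℝ) → ℝ)
    (hψ : ContDiff ℝ 2 ψ) (hψs : ContDiff ℝ 2 ψs)
    (hint1 : Integrable (fun x => p x * (grad' ψs x ⬝ᵥ (D x *ᵥ grad' ψs x))))
    (hint2 : Integrable (fun x => p x * (grad' ψ x ⬝ᵥ (D x *ᵥ grad' ψ x))))
    (hint3 : Integrable (fun x =>
      p x * (r x ⬝ᵥ grad' ψ x + (1 / 2) * (D x * hess' ψ x).trace)))
    (hint4 : Integrable (fun x => p x * (grad' ψ x ⬝ᵥ (D x *ᵥ grad' ψs x))))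
    (hFP : ∫ x, p x * (r x ⬝ᵥ grad' ψ x + (1 / 2) * (D x * hess' ψ x).trace
        + grad' ψ x ⬝ᵥ (D x *ᵥ grad' ψs x)) = 0) :
    -(∫ x, p x * ((1 / 2) * (grad' ψ x ⬝ᵥ (D x *ᵥ grad' ψ x))
        + r x ⬝ᵥ grad' ψ x + (1 / 2) * (D x * hess' ψ x).trace))
      ≤ (1 / 2) * ∫ x, p x * (grad' ψs x ⬝ᵥ (D x *ᵥ grad' ψs x)) := by
  set a : (Fin d → ℝ) → ℝ := fun x => p x * (grad' ψ x ⬝ᵥ (D x *ᵥ grad' ψ x)) with ha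
  set b : (Fin d → ℝ) → ℝ := fun x =>
    p x * (r x ⬝ᵥ grad' ψ x + (1 / 2) * (D x * hess' ψ x).trace) with hb
  set c : (Fin d → ℝ) → ℝ := fun x => p x * (grad' ψ x ⬝ᵥ (D x *ᵥ grad' ψs x)) with hc
  set s : (Fin d → ℝ) → ℝ := fun x => p x * (grad' ψs x ⬝ᵥ (D x *ᵥ grad' ψs x)) with hs
  -- pointwise Cauchy-Schwarz-type inequality
  have key : ∀ x, c x - (1 / 2) * a x ≤ (1 / 2) * s x := by
    intro x
    have hpsd := (hDpsd x).dotProduct_mulVec_nonneg (grad' ψ x - grad' ψs x)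
    rw [star_trivial] at hpsd
    have hexp : (grad' ψ x - grad' ψs x) ⬝ᵥ (D x *ᵥ (grad' ψ x - grad' ψs x))
        = grad' ψ x ⬝ᵥ (D x *ᵥ grad' ψ x) - grad' ψ x ⬝ᵥ (D x *ᵥ grad' ψs x)
          - grad' ψs x ⬝ᵥ (D x *ᵥ grad' ψ x)
          + grad' ψs x ⬝ᵥ (D x *ᵥ grad' ψs x) := by
      rw [Matrix.mulVec_sub, sub_dotProduct, dotProduct_sub,
        dotProduct_sub]
      ring
    have hsym : grad' ψs x ⬝ᵥ (D x *ᵥ grad' ψ x) = grad' ψ x ⬝ᵥ (D x *ᵥ grad' ψs x) := by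
      rw [Matrix.dotProduct_mulVec, ← Matrix.mulVec_transpose, (hDsymm x).eq,
        dotProduct_comm]
    rw [hexp, hsym] at hpsd
    have hp' := hp x
    simp only [ha, hb, hc, hs]
    nlinarith [mul_nonneg hp' hpsd]
  -- FP relation: ∫ b + ∫ c = 0
  have hFP' : (∫ x, b x) + (∫ x, c x) = 0 := by
    rw [← integral_add hint3 hint4]
    rw [← hFP]
    congr 1; ext x; simp only [hb, hc]; ring
  -- goal integral splits
  have hgoal : (∫ x, p x * ((1 / 2) * (grad' ψ x ⬝ᵥ (D x *ᵥ grad' ψ x))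
      + r x ⬝ᵥ grad' ψ x + (1 / 2) * (D x * hess' ψ x).trace))
      = (1 / 2) * (∫ x, a x) + ∫ x, b x := by
    rw [← integral_const_mul, ← integral_add (hint2.const_mul (1 / 2 : ℝ)) hint3]
    congr 1; ext x; simp only [ha, hb]; ring
  have hmono : (∫ x, c x - (1 / 2) * a x) ≤ ∫ x, (1 / 2) * s x :=
    integral_mono (hint4.sub (hint2.const_mul (1 / 2 : ℝ)))
      (hint1.const_mul (1 / 2 : ℝ)) key
  rw [integral_sub hint4 (hint2.const_mul (1 / 2 : ℝ)),
    integral_const_mul, integral_const_mul] at hmono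
  rw [hgoal]
  linarith
end

section
/- Let d ≥ 1, let p : ℝ^d → ℝ be nonnegative, let D : ℝ^d → Matrix (Fin d) (Fin d) ℝ take symmetric positive semidefinite values, let r : ℝ^d → ℝ^d, and let ψ, ψ* : ℝ^d → ℝ be twice continuously differentiable. Assume the functions x ↦ p(x)‖∇ψ*(x)‖²_{D(x)}, x ↦ p(x)‖∇ψ(x)‖²_{D(x)}, x ↦ p(x)(r(x)·∇ψ(x) + ½ tr(D(x) Hess ψ(x))), and x ↦ p(x) ∇ψ(x)·D(x)∇ψ*(x) are all integrable on ℝ^d, and assume the weak stationary Fokker–Planck relation ∫_{ℝ^d} p(x) ( r(x)·∇ψ(x) + ½ tr(D(x) Hess ψ(x)) + ∇ψ(x)·D(x)∇ψ*(x) ) dx = 0. Then equality −ε[ψ] = ½ ∫_{ℝ^d} p(x) ‖∇ψ*(x)‖²_{D(x)} dx holds if and only if ∫_{ℝ^d} p(x) ‖∇ψ*(x) − ∇ψ(x)‖²_{D(x)} dx = 0; in particular, equality holds when ∇ψ(x) = ∇ψ*(x) for all x. -/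
open MeasureTheory Matrix

/-- equality `-ε[ψ] = ½ ∫ p ‖∇ψ*‖²_D` holds iff
`∫ p ‖∇ψ* − ∇ψ‖²_D = 0`; in particular it holds when `∇ψ = ∇ψ*` everywhere. -/
theorem variational_equality_iff
    (d : ℕ) (hd : 1 ≤ d)
    (p : (Fin d → ℝ) → ℝ) (hp : ∀ x, 0 ≤ p x)
    (D : (Fin d → ℝ) → Matrix (Fin d) (Fin d) ℝ)
    (hDsymm : ∀ x, (D x).IsSymm) (hDpsd : ∀ x, (D x).PosSemidef)
    (r : (Fin d → ℝ) → (Fin d → ℝ))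
    (ψ ψs : (Fin d → ℝ) → ℝ)
    (hψ : ContDiff ℝ 2 ψ) (hψs : ContDiff ℝ 2 ψs)
    (hint1 : Integrable (fun x => p x * (grad' ψs x ⬝ᵥ (D x *ᵥ grad' ψs x))))
    (hint2 : Integrable (fun x => p x * (grad' ψ x ⬝ᵥ (D x *ᵥ grad' ψ x))))
    (hint3 : Integrable (fun x =>
      p x * (r x ⬝ᵥ grad' ψ x + (1 / 2) * (D x * hess' ψ x).trace)))
    (hint4 : Integrable (fun x => p x * (grad' ψ x ⬝ᵥ (D x *ᵥ grad' ψs x))))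
    (hFP : ∫ x, p x * (r x ⬝ᵥ grad' ψ x + (1 / 2) * (D x * hess' ψ x).trace
        + grad' ψ x ⬝ᵥ (D x *ᵥ grad' ψs x)) = 0) :
    (-(∫ x, p x * ((1 / 2) * (grad' ψ x ⬝ᵥ (D x *ᵥ grad' ψ x))
        + r x ⬝ᵥ grad' ψ x + (1 / 2) * (D x * hess' ψ x).trace))
      = (1 / 2) * ∫ x, p x * (grad' ψs x ⬝ᵥ (D x *ᵥ grad' ψs x))
      ↔ ∫ x, p x *
          ((grad' ψs x - grad' ψ x) ⬝ᵥ (D x *ᵥ (grad' ψs x - grad' ψ x))) = 0)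
    ∧ ((∀ x, grad' ψ x = grad' ψs x) →
      -(∫ x, p x * ((1 / 2) * (grad' ψ x ⬝ᵥ (D x *ᵥ grad' ψ x))
          + r x ⬝ᵥ grad' ψ x + (1 / 2) * (D x * hess' ψ x).trace))
        = (1 / 2) * ∫ x, p x * (grad' ψs x ⬝ᵥ (D x *ᵥ grad' ψs x))) := by
  classical
  -- symmetry of the quadratic pairing
  have hsym : ∀ x (a b : Fin d → ℝ), b ⬝ᵥ (D x *ᵥ a) = a ⬝ᵥ (D x *ᵥ b) := by
    intro x a b
    rw [Matrix.dotProduct_mulVec, ← Matrix.mulVec_transpose, (hDsymm x).eq,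
      dotProduct_comm]
  set I1 := ∫ x, p x * (grad' ψs x ⬝ᵥ (D x *ᵥ grad' ψs x)) with hI1
  set I2 := ∫ x, p x * (grad' ψ x ⬝ᵥ (D x *ᵥ grad' ψ x)) with hI2
  set I3 := ∫ x, p x * (r x ⬝ᵥ grad' ψ x + (1 / 2) * (D x * hess' ψ x).trace) with hI3
  set I4 := ∫ x, p x * (grad' ψ x ⬝ᵥ (D x *ᵥ grad' ψs x)) with hI4
  -- the FP integral splits
  have hFPsplit : I3 + I4 = 0 := by
    rw [hI3, hI4, ← integral_add hint3 hint4, ← hFP]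
    congr 1; funext x; ring
  -- expansion of the quadratic form of the difference
  have hquad : ∀ x, p x * ((grad' ψs x - grad' ψ x) ⬝ᵥ (D x *ᵥ (grad' ψs x - grad' ψ x)))
      = p x * (grad' ψs x ⬝ᵥ (D x *ᵥ grad' ψs x))
        + p x * (grad' ψ x ⬝ᵥ (D x *ᵥ grad' ψ x))
        - 2 * (p x * (grad' ψ x ⬝ᵥ (D x *ᵥ grad' ψs x))) := by
    intro x
    have h := hsym x (grad' ψ x) (grad' ψs x)
    simp only [Matrix.mulVec_sub, sub_dotProduct, dotProduct_sub]
    rw [h]; ring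
  have hquadint : (∫ x, p x *
      ((grad' ψs x - grad' ψ x) ⬝ᵥ (D x *ᵥ (grad' ψs x - grad' ψ x))))
      = I1 + I2 - 2 * I4 := by
    calc _ = ∫ x, (p x * (grad' ψs x ⬝ᵥ (D x *ᵥ grad' ψs x))
            + p x * (grad' ψ x ⬝ᵥ (D x *ᵥ grad' ψ x)))
            - 2 * (p x * (grad' ψ x ⬝ᵥ (D x *ᵥ grad' ψs x))) := by
            congr 1; funext x; rw [hquad x]
      _ = I1 + I2 - 2 * I4 := by
            have hadd : Integrable (fun x => p x * (grad' ψs x ⬝ᵥ (D x *ᵥ grad' ψs x))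
                + p x * (grad' ψ x ⬝ᵥ (D x *ᵥ grad' ψ x))) := hint1.add hint2
            rw [integral_sub hadd (hint4.const_mul 2),
              integral_add hint1 hint2, integral_const_mul]
  -- the LHS integral splits
  have hLHS : (∫ x, p x * ((1 / 2) * (grad' ψ x ⬝ᵥ (D x *ᵥ grad' ψ x))
        + r x ⬝ᵥ grad' ψ x + (1 / 2) * (D x * hess' ψ x).trace))
      = (1 / 2) * I2 + I3 := by
    calc _ = ∫ x, (1 / 2) * (p x * (grad' ψ x ⬝ᵥ (D x *ᵥ grad' ψ x)))
            + p x * (r x ⬝ᵥ grad' ψ x + (1 / 2) * (D x * hess' ψ x).trace) := by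
            congr 1; funext x; ring
      _ = (1 / 2) * I2 + I3 := by
            rw [integral_add (hint2.const_mul _) hint3, integral_const_mul]
  constructor
  · rw [hLHS, hquadint]
    constructor <;> intro h <;> linarith
  · intro hgr
    rw [hLHS]
    have hI12 : I1 = I4 := by
      rw [hI1, hI4]; congr 1; funext x; rw [hgr x]
    have hI24 : I2 = I4 := by
      rw [hI2, hI4]
      congr 1; funext x
      rw [hsym x (grad' ψs x) (grad' ψ x), hgr x]
    linarith
end

section
/- Let d ≥ 1, let p : ℝ^d → ℝ be nonnegative, let D : ℝ^d → Matrix (Fin d) (Fin d) ℝ take symmetric values, let r : ℝ^d → ℝ^d, and let ψ, ψ* : ℝ^d → ℝ be twice continuously differentiable. Assume the functions x ↦ p(x)‖∇ψ*(x)‖²_{D(x)}, x ↦ p(x)‖∇ψ(x)‖²_{D(x)}, x ↦ p(x)(r(x)·∇ψ(x) + ½ tr(D(x) Hess ψ(x))), and x ↦ p(x) ∇ψ(x)·D(x)∇ψ*(x) are all integrable on ℝ^d, and assume the weak stationary Fokker–Planck relation ∫_{ℝ^d} p(x) ( r(x)·∇ψ(x) + ½ tr(D(x) Hess ψ(x))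 + ∇ψ(x)·D(x)∇ψ*(x) ) dx = 0. Then the variational functional decomposes as a difference of relative entropy rates: ε[ψ] = ½ ∫_{ℝ^d} p(x) ‖∇ψ*(x) − ∇ψ(x)‖²_{D(x)} dx − ½ ∫_{ℝ^d} p(x) ‖∇ψ*(x)‖²_{D(x)} dx. -/
open MeasureTheory Matrix

lemma symm_dot' {d : ℕ} (A : Matrix (Fin d) (Fin d) ℝ) (hA : A.IsSymm)
    (u v : Fin d → ℝ) : u ⬝ᵥ (A *ᵥ v) = v ⬝ᵥ (A *ᵥ u) := by
  rw [dotProduct_mulVec, ← Matrix.mulVec_transpose, hA.eq, dotProduct_comm]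

/-- the variational functional decomposes as a difference of
relative entropy rates, `ε[ψ] = d(P^g, P^{r+D∇ψ}) − d(P^g, P^r)`. -/
theorem variational_entropy_rate_difference
    (d : ℕ) (hd : 1 ≤ d)
    (p : (Fin d → ℝ) → ℝ) (hp : ∀ x, 0 ≤ p x)
    (D : (Fin d → ℝ) → Matrix (Fin d) (Fin d) ℝ) (hDsymm : ∀ x, (D x).IsSymm)
    (r : (Fin d → ℝ) → (Fin d → ℝ))
    (ψ ψs : (Fin d → ℝ) → ℝ)
    (hψ : ContDiff ℝ 2 ψ) (hψs : ContDiff ℝ 2 ψs)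
    (hint1 : Integrable (fun x => p x * (grad' ψs x ⬝ᵥ (D x *ᵥ grad' ψs x))))
    (hint2 : Integrable (fun x => p x * (grad' ψ x ⬝ᵥ (D x *ᵥ grad' ψ x))))
    (hint3 : Integrable (fun x =>
      p x * (r x ⬝ᵥ grad' ψ x + (1 / 2) * (D x * hess' ψ x).trace)))
    (hint4 : Integrable (fun x => p x * (grad' ψ x ⬝ᵥ (D x *ᵥ grad' ψs x))))
    (hFP : ∫ x, p x * (r x ⬝ᵥ grad' ψ x + (1 / 2) * (D x * hess' ψ x).trace
        + grad' ψ x ⬝ᵥ (D x *ᵥ grad' ψs x)) = 0) :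
    (∫ x, p x * ((1 / 2) * (grad' ψ x ⬝ᵥ (D x *ᵥ grad' ψ x))
        + r x ⬝ᵥ grad' ψ x + (1 / 2) * (D x * hess' ψ x).trace))
      = (1 / 2) * (∫ x, p x *
          ((grad' ψs x - grad' ψ x) ⬝ᵥ (D x *ᵥ (grad' ψs x - grad' ψ x))))
        - (1 / 2) * ∫ x, p x * (grad' ψs x ⬝ᵥ (D x *ᵥ grad' ψs x)) := by
  set f1 := fun x => p x * (grad' ψs x ⬝ᵥ (D x *ᵥ grad' ψs x)) with hf1
  set f2 := fun x => p x * (grad' ψ x ⬝ᵥ (D x *ᵥ grad' ψ x)) with hf2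
  set f3 := fun x => p x * (r x ⬝ᵥ grad' ψ x + (1 / 2) * (D x * hess' ψ x).trace) with hf3
  set f4 := fun x => p x * (grad' ψ x ⬝ᵥ (D x *ᵥ grad' ψs x)) with hf4
  have hFP' : (∫ x, f3 x) + (∫ x, f4 x) = 0 := by
    rw [← integral_add hint3 hint4]
    rw [← hFP]
    congr 1; funext x; simp [hf3, hf4]; ring
  have hL : (∫ x, p x * ((1 / 2) * (grad' ψ x ⬝ᵥ (D x *ᵥ grad' ψ x))
      + r x ⬝ᵥ grad' ψ x + (1 / 2) * (D x * hess' ψ x).trace))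
      = (1 / 2) * (∫ x, f2 x) + (∫ x, f3 x) := by
    rw [← integral_const_mul, ← integral_add (hint2.const_mul (1/2 : ℝ)) hint3]
    congr 1; funext x; simp [hf2, hf3]; ring
  have hexp : (fun x => p x * ((grad' ψs x - grad' ψ x) ⬝ᵥ (D x *ᵥ (grad' ψs x - grad' ψ x))))
      = fun x => f1 x - 2 * f4 x + f2 x := by
    funext x
    have hsym := symm_dot' (D x) (hDsymm x) (grad' ψs x) (grad' ψ x)
    simp only [hf1, hf2, hf4, Matrix.mulVec_sub, sub_dotProduct,
      dotProduct_sub]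
    rw [hsym]; ring
  have hR : (∫ x, p x * ((grad' ψs x - grad' ψ x) ⬝ᵥ (D x *ᵥ (grad' ψs x - grad' ψ x))))
      = (∫ x, f1 x) - 2 * (∫ x, f4 x) + (∫ x, f2 x) := by
    rw [hexp, integral_add (by exact (hint1.sub (hint4.const_mul 2))) hint2,
      integral_sub hint1 (hint4.const_mul 2), integral_const_mul]
  rw [hL, hR]
  linarith
end
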